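/- For every z = (z₁, z₂) ∈ ℝ² with z ≠ 0, the matrix J_z is invertible; equivalently, the bilinear form B_z(u, v) = vᵀ J_z u on ℝ⁸ is non-degenerate, i.e. if v ∈ ℝ⁸ satisfies B_z(u, v) = 0 for all u ∈ ℝ⁸, then v = 0. (This is the Métivier non-degeneracy condition for the Müller–Seeger example.) -/

import Mathlib

open Matrix

/-- The 4×4 matrix `E_z` from the Müller–Seeger example. -/
noncomputable def Ez (z : ℝ × ℝ) : Matrix (Fin 4) (Fin 4) ℝ :=
  !![z.1, 0, 0, -z.2;
     z.2, z.1, 0, 0;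
     0, z.2, z.1, 0;
     0, 0, z.2, z.1]

/-- The 8×8 block matrix `J_z = [[0, E_z], [-E_z, 0]]`. -/
noncomputable def Jz (z : ℝ × ℝ) : Matrix (Fin 4 ⊕ Fin 4) (Fin 4 ⊕ Fin 4) ℝ :=
  Matrix.fromBlocks 0 (Ez z) (-(Ez z)) 0

theorem pow_four_add_pow_four_eq_zero_iff {R : Type*} [CommRing R] [LinearOrder R]
    [IsStrictOrderedRing R] {a b : R} : a ^ 4 + b ^ 4 = 0 ↔ a = 0 ∧ b = 0 := by
  have h (x : R) : x ^ 4 = x ^ 2 * x ^ 2 := by ring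
  rw [h, h, mul_self_add_mul_self_eq_zero, pow_eq_zero_iff two_ne_zero,
    pow_eq_zero_iff two_ne_zero]

theorem Matrix.isUnit_fromBlocks_zero_neg {n R : Type*} [Fintype n] [DecidableEq n] [Ring R]
    {E : Matrix n n R} (hE : IsUnit E) : IsUnit (fromBlocks 0 E (-E) 0) := by
  obtain ⟨u, rfl⟩ := hE
  refine ⟨⟨fromBlocks 0 u (-u) 0, fromBlocks 0 (-↑u⁻¹) ↑u⁻¹ 0, ?_, ?_⟩, rfl⟩ <;>
    simp [fromBlocks_multiply, ← fromBlocks_one]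

theorem det_Ez (z : ℝ × ℝ) : (Ez z).det = z.1 ^ 4 + z.2 ^ 4 := by
  simp [Ez, det_succ_row_zero, Fin.sum_univ_succ, Fin.succAbove]
  ring

theorem isUnit_Ez {z : ℝ × ℝ} (hz : z ≠ 0) : IsUnit (Ez z) := by
  rw [isUnit_iff_isUnit_det, det_Ez, isUnit_iff_ne_zero, Ne, pow_four_add_pow_four_eq_zero_iff]
  exact fun h ↦ hz (Prod.ext h.1 h.2)

theorem Jz_nondegenerate (z : ℝ × ℝ) (hz : z ≠ 0) :
    IsUnit (Jz z) ∧
      ∀ v : Fin 4 ⊕ Fin 4 → ℝ,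
        (∀ u : Fin 4 ⊕ Fin 4 → ℝ, v ⬝ᵥ (Jz z *ᵥ u) = 0) → v = 0 := by
  have hJ : IsUnit (Jz z) := isUnit_fromBlocks_zero_neg (isUnit_Ez hz)
  have hdet : (Jz z).det ≠ 0 := ((isUnit_iff_isUnit_det _).1 hJ).ne_zero
  exact ⟨hJ, separatingLeft_def.1 (separatingLeft_iff_det_ne_zero.2 hdet)⟩
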